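/- For all real c > -1, the partial products ∏_{n=1}^{N} [((n+1/2)(n+c/2)) / ((n+c)(n+(c+1)/2))]^{u_n} converge as N → ∞ to c+1. -/

import Mathlib

open Filter Finset Topology

/-- The Thue–Morse sequence with values `±1`: `u n = (-1)^(s₂ n)` where `s₂ n`
is the sum of the binary digits of `n`. -/
def u (n : ℕ) : ℤ := (-1) ^ (Nat.digits 2 n).sum

/-!
Write `a n` for the `n`-th factor of the product and `r n = (n + c) / n`. The identity
`a m * r m = r (2m) / r (2m+1)`, together with `u (2m) = u m` and `u (2m+1) = -u m`, shows that
the partial products `P N = ∏_{n ≤ N} (a n)^(u n)` and `T M = ∏_{n ≤ M} (r n)^(u n)` satisfy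
`P N * T N = (c + 1) * T (2N+1)`, the factor `c + 1 = r 1` coming from `u 1 = -1`.
By Dirichlet's test (the partial sums of `u` are bounded and `log (r n)` tends monotonically
to `0`), `T M` converges to a positive limit, hence `P N → c + 1`.
-/

lemma u_one : u 1 = -1 := by simp [u]

lemma u_two_mul (n : ℕ) : u (2 * n) = u n := by
  rcases Nat.eq_zero_or_pos n with rfl | hn
  · rfl
  · rw [u, Nat.digits_def' (by norm_num) (by omega), show 2 * n / 2 = n by omega]
    simp [u]

lemma u_two_mul_add_one (n : ℕ) : u (2 * n + 1) = -u n := by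
  rw [u, Nat.digits_def' (by norm_num) (by omega), show (2 * n + 1) / 2 = n by omega]
  simp [u, pow_add]

lemma sum_range_two_mul_u (m : ℕ) : ∑ n ∈ range (2 * m), u n = 0 := by
  induction m with
  | zero => rfl
  | succ m ih =>
    rw [Nat.mul_succ, sum_range_succ, sum_range_succ, ih, u_two_mul, u_two_mul_add_one]
    ring

lemma abs_sum_range_u_le_one (k : ℕ) : |∑ n ∈ range k, u n| ≤ 1 := by
  obtain ⟨m, rfl | rfl⟩ := Nat.even_or_odd' k
  · simp [sum_range_two_mul_u]
  · rw [sum_range_succ, sum_range_two_mul_u, zero_add, u, abs_pow, abs_neg, abs_one, one_pow]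

lemma norm_sum_range_u_succ_le (k : ℕ) : ‖∑ i ∈ range k, (u (i + 1) : ℝ)‖ ≤ 2 := by
  have h := abs_sum_range_u_le_one (k + 1)
  rw [sum_range_succ', u, Nat.digits_zero, List.sum_nil, pow_zero] at h
  have h2 : |∑ i ∈ range k, u (i + 1)| ≤ 2 := by
    obtain ⟨h_lo, h_hi⟩ := abs_le.1 h
    exact abs_le.2 ⟨by linarith, by linarith⟩
  rw [Real.norm_eq_abs]
  exact_mod_cast h2

section

variable {c : ℝ}

noncomputable def ratio (c : ℝ) (n : ℕ) : ℝ := 1 + c / n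

noncomputable def factor (c : ℝ) (n : ℕ) : ℝ :=
  (((n : ℝ) + 1 / 2) * ((n : ℝ) + c / 2)) / (((n : ℝ) + c) * ((n : ℝ) + (c + 1) / 2))

noncomputable def ratioProd (c : ℝ) (M : ℕ) : ℝ := ∏ n ∈ Icc 1 M, ratio c n ^ u n

lemma ratio_eq {n : ℕ} (hn : 1 ≤ n) : ratio c n = (n + c) / n := by
  rw [ratio, one_add_div (by positivity)]

lemma ratioProd_succ (M : ℕ) :
    ratioProd c (M + 1) = ratioProd c M * ratio c (M + 1) ^ u (M + 1) :=
  prod_Icc_succ_top (by omega) _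

lemma ratio_pos (hc : -1 < c) {n : ℕ} (hn : 1 ≤ n) : 0 < ratio c n := by
  have : (1 : ℝ) ≤ n := by exact_mod_cast hn
  rw [ratio_eq hn]
  exact div_pos (by linarith) (by linarith)

lemma factor_mul_ratio (hc : -1 < c) {m : ℕ} (hm : 1 ≤ m) :
    factor c m * ratio c m = ratio c (2 * m) / ratio c (2 * m + 1) := by
  have : (1 : ℝ) ≤ m := by exact_mod_cast hm
  rw [factor, ratio_eq hm, ratio_eq (by omega), ratio_eq (by omega)]
  push_cast
  have : (m : ℝ) + c ≠ 0 := by linarith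
  have : (m : ℝ) + (c + 1) / 2 ≠ 0 := by linarith
  have : 2 * (m : ℝ) + 1 + c ≠ 0 := by linarith
  field_simp
  ring

lemma prod_factor_mul_ratioProd (hc : -1 < c) (N : ℕ) :
    (∏ n ∈ Icc 1 N, factor c n ^ u n) * ratioProd c N = (c + 1) * ratioProd c (2 * N + 1) := by
  induction N with
  | zero =>
    have h1 : ratio c 1 = c + 1 := by rw [ratio, Nat.cast_one, div_one, add_comm]
    simp [ratioProd, u_one, h1, mul_inv_cancel₀ (show c + 1 ≠ 0 by linarith)]
  | succ N ih =>
    have hodd : ratioProd c (2 * (N + 1) + 1) = ratioProd c (2 * N + 1) *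
        (ratio c (2 * (N + 1)) / ratio c (2 * (N + 1) + 1)) ^ u (N + 1) := by
      rw [ratioProd_succ, show 2 * (N + 1) = 2 * N + 1 + 1 by ring, ratioProd_succ,
        ← show 2 * (N + 1) = 2 * N + 1 + 1 by ring, u_two_mul, u_two_mul_add_one, zpow_neg,
        div_zpow, mul_assoc, div_eq_mul_inv]
    rw [prod_Icc_succ_top (by omega), ratioProd_succ, hodd, ← factor_mul_ratio hc (by omega),
      mul_zpow, mul_assoc, ← mul_assoc ((c + 1)), ← ih]
    ring

lemma antitone_log_ratio_succ (hc : 0 ≤ c) : Antitone fun i : ℕ ↦ Real.log (ratio c (i + 1)) := by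
  refine antitone_nat_of_succ_le fun i ↦ Real.log_le_log (ratio_pos (by linarith) (by omega)) ?_
  simp only [ratio]
  gcongr
  exact_mod_cast i.le_succ

lemma monotone_log_ratio_succ (hc : -1 < c) (hc0 : c ≤ 0) :
    Monotone fun i : ℕ ↦ Real.log (ratio c (i + 1)) := by
  refine monotone_nat_of_le_succ fun i ↦ Real.log_le_log (ratio_pos hc (by omega)) ?_
  simp only [ratio, add_le_add_iff_left]
  rw [div_le_div_iff₀ (by positivity) (by positivity)]
  push_cast
  linarith

lemma tendsto_log_ratio_succ (c : ℝ) :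
    Tendsto (fun i : ℕ ↦ Real.log (ratio c (i + 1))) atTop (𝓝 0) := by
  have h : Tendsto (ratio c) atTop (𝓝 1) := by
    unfold ratio
    simpa only [add_zero] using (tendsto_const_div_atTop_nhds_zero_nat c).const_add 1
  simpa only [Function.comp_def, Real.log_one] using
    ((Real.continuousAt_log one_ne_zero).tendsto.comp h).comp (tendsto_add_atTop_nat 1)

lemma cauchySeq_sum_log_ratio_mul_u (hc : -1 < c) :
    CauchySeq fun M ↦ ∑ i ∈ range M, Real.log (ratio c (i + 1)) • (u (i + 1) : ℝ) := by
  rcases le_total 0 c with hc0 | hc0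
  · exact (antitone_log_ratio_succ hc0).cauchySeq_series_mul_of_tendsto_zero_of_bounded
      (tendsto_log_ratio_succ c) norm_sum_range_u_succ_le
  · exact (monotone_log_ratio_succ hc hc0).cauchySeq_series_mul_of_tendsto_zero_of_bounded
      (tendsto_log_ratio_succ c) norm_sum_range_u_succ_le

lemma ratioProd_eq_exp (hc : -1 < c) (M : ℕ) :
    ratioProd c M = Real.exp (∑ i ∈ range M, Real.log (ratio c (i + 1)) • (u (i + 1) : ℝ)) := by
  rw [Real.exp_sum, ratioProd, range_eq_Ico,
    prod_Ico_add' (fun n ↦ Real.exp (Real.log (ratio c n) • (u n : ℝ))) 0 M 1]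
  refine prod_congr rfl fun n hn ↦ ?_
  rw [smul_eq_mul, mul_comm, ← Real.log_zpow,
    Real.exp_log (zpow_pos (ratio_pos hc (mem_Ico.1 hn).1) _)]

lemma exists_pos_tendsto_ratioProd (hc : -1 < c) :
    ∃ L, 0 < L ∧ Tendsto (ratioProd c) atTop (𝓝 L) := by
  obtain ⟨ℓ, hℓ⟩ := cauchySeq_tendsto_of_complete (cauchySeq_sum_log_ratio_mul_u hc)
  refine ⟨Real.exp ℓ, Real.exp_pos ℓ, ?_⟩
  rw [show ratioProd c = _ from funext (ratioProd_eq_exp hc)]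
  exact (Real.continuous_exp.tendsto ℓ).comp hℓ

end

/-- For `c > -1`, the partial products
`∏_{n=1}^{N} [((n+1/2)(n+c/2)) / ((n+c)(n+(c+1)/2))]^{u_n}` converge to `c+1`. -/
theorem stmt_16 (c : ℝ) (hc : -1 < c) :
    Tendsto (fun N : ℕ => ∏ n ∈ Finset.Icc 1 N,
      ((((n : ℝ) + 1 / 2) * ((n : ℝ) + c / 2)) /
        (((n : ℝ) + c) * ((n : ℝ) + (c + 1) / 2))) ^ (u n))
      atTop (𝓝 (c + 1)) := by
  change Tendsto (fun N : ℕ ↦ ∏ n ∈ Icc 1 N, factor c n ^ u n) atTop (𝓝 (c + 1))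
  obtain ⟨L, hL, hT⟩ := exists_pos_tendsto_ratioProd hc
  have hT' : Tendsto (fun N ↦ ratioProd c (2 * N + 1)) atTop (𝓝 L) :=
    hT.comp (tendsto_atTop_mono (fun N ↦ (by omega : N ≤ 2 * N + 1)) tendsto_id)
  have hlim := ((hT'.div hT hL.ne').const_mul (c + 1))
  rw [div_self hL.ne', mul_one] at hlim
  refine hlim.congr fun N ↦ ?_
  have hTN : ratioProd c N ≠ 0 := by
    rw [ratioProd_eq_exp hc]
    exact (Real.exp_pos _).ne'
  rw [Pi.div_apply, ← mul_div_assoc, ← prod_factor_mul_ratioProd hc, mul_div_cancel_right₀ _ hTN]
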